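/- arXiv:0901.1205 — 2 statements merged into one kernel-verified Lean document; each statement's English description precedes it below -/
import Mathlib

section
/- Let B₀, B₁, B₂, B₃ be commutative rings with ring homomorphisms j_δ : B_δ → B_{δ−1} for δ = 1, 2, 3. For each δ = 1, 2, 3 let A_δ be a commutative ring, f_δ : B_δ → A_δ a ring homomorphism, g_δ : A_δ → B_δ an additive group homomorphism, and c_δ ∈ A_δ a non-zero-divisor such that f_δ(g_δ(a)) = c_δ·a for all a ∈ A_δ and such that every b ∈ B_δ with j_δ(b) = 0 lies in the image of g_δ. Then the map B₃ → A₃ × A₂ × A₁ × B₀ sending b to (f₃(b), f₂(j₃(b)), f₁(j₂(j₃(b))), j₁(j₂(j₃(b)))) is injective. -/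
/-!
Each step `B_δ → A_δ × B_{δ-1}`, `b ↦ (f_δ b, j_δ b)`, is injective: an element `b` of the kernel
of `j_δ` is `g_δ a` for some `a`, and then `c_δ * a = f_δ (g_δ a) = f_δ b = 0` forces `a = 0`
because `c_δ` is a non-zero-divisor. Composing the three steps gives the claim.
-/

section Excision

variable {A B B' : Type*} [Ring A] [AddGroup B] [AddGroup B']
  {j : B →+ B'} {f : B →+ A} {g : A →+ B} {c : A}

theorem eq_zero_of_map_eq_zero_of_excision (hc : c ∈ nonZeroDivisors A)
    (hfg : ∀ a, f (g a) = c * a) (hker : ∀ b, j b = 0 → ∃ a, g a = b) {b : B}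
    (hf : f b = 0) (hj : j b = 0) : b = 0 := by
  obtain ⟨a, rfl⟩ := hker b hj
  have ha : a = 0 := hc.1 a (by rw [← hfg, hf])
  rw [ha, map_zero]

theorem injective_prodMk_of_excision (hc : c ∈ nonZeroDivisors A)
    (hfg : ∀ a, f (g a) = c * a) (hker : ∀ b, j b = 0 → ∃ a, g a = b)
    {X : Type*} {φ : B' → X} (hφ : Function.Injective φ) :
    Function.Injective (fun b => (f b, φ (j b))) := by
  intro x y hxy
  obtain ⟨hf, hj⟩ := Prod.mk.inj hxy
  rw [← sub_eq_zero] at hf ⊢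
  refine eq_zero_of_map_eq_zero_of_excision hc hfg hker ?_ ?_
  · rwa [map_sub]
  · rw [map_sub, hφ hj, sub_self]

end Excision

/-- Abstract form of Proposition `injleqtre`: the ring `B₃` (playing the role of
`A*(M₀^{≤3})⊗ℚ`) injects into `A₃ × A₂ × A₁ × B₀`, the product of the Chow rings of the
strata, given excision sequences and self-intersection formulas at each step. -/
theorem stmt_1 {B₀ B₁ B₂ B₃ A₁ A₂ A₃ : Type*}
    [CommRing B₀] [CommRing B₁] [CommRing B₂] [CommRing B₃]
    [CommRing A₁] [CommRing A₂] [CommRing A₃]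
    (j₁ : B₁ →+* B₀) (j₂ : B₂ →+* B₁) (j₃ : B₃ →+* B₂)
    (f₁ : B₁ →+* A₁) (f₂ : B₂ →+* A₂) (f₃ : B₃ →+* A₃)
    (g₁ : A₁ →+ B₁) (g₂ : A₂ →+ B₂) (g₃ : A₃ →+ B₃)
    (c₁ : A₁) (c₂ : A₂) (c₃ : A₃)
    (hc₁ : c₁ ∈ nonZeroDivisors A₁) (hc₂ : c₂ ∈ nonZeroDivisors A₂)
    (hc₃ : c₃ ∈ nonZeroDivisors A₃)
    (hfg₁ : ∀ a : A₁, f₁ (g₁ a) = c₁ * a)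
    (hfg₂ : ∀ a : A₂, f₂ (g₂ a) = c₂ * a)
    (hfg₃ : ∀ a : A₃, f₃ (g₃ a) = c₃ * a)
    (hker₁ : ∀ b : B₁, j₁ b = 0 → ∃ a : A₁, g₁ a = b)
    (hker₂ : ∀ b : B₂, j₂ b = 0 → ∃ a : A₂, g₂ a = b)
    (hker₃ : ∀ b : B₃, j₃ b = 0 → ∃ a : A₃, g₃ a = b) :
    Function.Injective
      (fun b : B₃ => (f₃ b, f₂ (j₃ b), f₁ (j₂ (j₃ b)), j₁ (j₂ (j₃ b)))) :=
  have step₁ := injective_prodMk_of_excision (f := f₁.toAddMonoidHom) (j := j₁.toAddMonoidHom)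
    hc₁ hfg₁ hker₁ Function.injective_id
  have step₂ := injective_prodMk_of_excision (f := f₂.toAddMonoidHom) (j := j₂.toAddMonoidHom)
    hc₂ hfg₂ hker₂ step₁
  injective_prodMk_of_excision (f := f₃.toAddMonoidHom) (j := j₃.toAddMonoidHom)
    hc₃ hfg₃ hker₃ step₂
end

section
/- Let Γ and Γ' be finite trees (connected acyclic simple graphs) and let d be an ordered deformation of Γ into Γ', i.e. a surjective map from the vertices of Γ' to the vertices of Γ such that (1) whenever d(P) = d(Q), every vertex R on the unique path in Γ' from P to Q satisfies d(R) = d(P), and (2) for every edge {P,Q} of Γ' with d(P) ≠ d(Q), the pair {d(P), d(Q)} is an edge of Γ. Then for every edge {A,B} of Γ there exist adjacent vertices P, Q of Γ' with d(P) = A and d(Q) = B; consequently the number of edges of Γ is at most the number of edges of Γ'. -/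
/-!
A walk in `Γ'` between preimages of `A` and `B` pushes forward along `d` to a walk in `Γ`
from `A` to `B` (steps inside a fibre are dropped), all of whose edges are images of edges
of `Γ'`. Since `Γ` is acyclic, every edge `{A, B}` is a bridge and so lies on every walk
from `A` to `B`. Hence the edges of `Γ` all lie in the image of the edges of `Γ'` under
`Sym2.map d`, which gives the inequality.
-/

namespace SimpleGraph

variable {V V' : Type*} {G : SimpleGraph V} {G' : SimpleGraph V'} {d : V' → V}

theorem IsAcyclic.mem_edges_of_adj (hG : G.IsAcyclic) {A B : V} (hAB : G.Adj A B)
    (w : G.Walk A B) : s(A, B) ∈ w.edges :=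
  isBridge_iff_forall_walk_mem_edges.mp (isAcyclic_iff_forall_adj_isBridge.mp hG hAB) w

theorem Walk.exists_walk_edges_subset_image_edgeSet
    (hd : ∀ P Q : V', G'.Adj P Q → d P ≠ d Q → G.Adj (d P) (d Q)) {P Q : V'}
    (p : G'.Walk P Q) :
    ∃ w : G.Walk (d P) (d Q), ∀ e ∈ w.edges, e ∈ Sym2.map d '' G'.edgeSet := by
  induction p with
  | nil => exact ⟨.nil, by simp⟩
  | @cons P R Q hPR p ih =>
    obtain ⟨w, hw⟩ := ih
    by_cases hPR' : d P = d R
    · exact ⟨w.copy hPR'.symm rfl, by simpa using hw⟩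
    · refine ⟨.cons (hd P R hPR hPR') w, fun e he => ?_⟩
      rcases List.mem_cons.mp (Walk.edges_cons _ _ ▸ he) with rfl | he
      · exact ⟨s(P, R), hPR, rfl⟩
      · exact hw e he

theorem edgeSet_subset_image_edgeSet (hG : G.IsAcyclic) (hG' : G'.Connected)
    (hsurj : Function.Surjective d)
    (hd : ∀ P Q : V', G'.Adj P Q → d P ≠ d Q → G.Adj (d P) (d Q)) :
    G.edgeSet ⊆ Sym2.map d '' G'.edgeSet := by
  rintro ⟨A, B⟩ hAB
  obtain ⟨P, rfl⟩ := hsurj A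
  obtain ⟨Q, rfl⟩ := hsurj B
  obtain ⟨w, hw⟩ := (hG'.preconnected P Q).some.exists_walk_edges_subset_image_edgeSet hd
  exact hw _ (hG.mem_edges_of_adj hAB w)

end SimpleGraph

theorem stmt_9_general {V V' : Type*} [Fintype V']
    (G : SimpleGraph V) (G' : SimpleGraph V')
    (hG : G.IsTree) (hG' : G'.IsTree)
    (d : V' → V) (hsurj : Function.Surjective d)
    (h2 : ∀ P Q : V', G'.Adj P Q → d P ≠ d Q → G.Adj (d P) (d Q)) :
    (∀ A B : V, G.Adj A B → ∃ P Q : V', G'.Adj P Q ∧ d P = A ∧ d Q = B) ∧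
    G.edgeSet.ncard ≤ G'.edgeSet.ncard := by
  have hsub := SimpleGraph.edgeSet_subset_image_edgeSet hG.isAcyclic hG'.connected hsurj h2
  refine ⟨fun A B hAB => ?_, (Set.ncard_le_ncard hsub).trans Set.ncard_image_le⟩
  obtain ⟨⟨P, Q⟩, hPQ, hmap⟩ := hsub (G.mem_edgeSet.mpr hAB)
  rcases Sym2.eq_iff.mp hmap with ⟨rfl, rfl⟩ | ⟨rfl, rfl⟩
  · exact ⟨P, Q, hPQ, rfl, rfl⟩
  · exact ⟨Q, P, G'.adj_symm hPQ, rfl, rfl⟩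

/-- If `d` is an ordered deformation of the finite tree `Γ` (graph `G` on `V`) into the
finite tree `Γ'` (graph `G'` on `V'`), then every edge `{A,B}` of `Γ` is the image of an
edge of `Γ'`; consequently `Γ` has at most as many edges as `Γ'`. -/
theorem stmt_9 {V V' : Type*} [Fintype V] [Fintype V']
    (G : SimpleGraph V) (G' : SimpleGraph V')
    (hG : G.IsTree) (hG' : G'.IsTree)
    (d : V' → V) (hsurj : Function.Surjective d)
    (h1 : ∀ P Q : V', d P = d Q →
      ∀ p : G'.Walk P Q, p.IsPath → ∀ R ∈ p.support, d R = d P)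
    (h2 : ∀ P Q : V', G'.Adj P Q → d P ≠ d Q → G.Adj (d P) (d Q)) :
    (∀ A B : V, G.Adj A B → ∃ P Q : V', G'.Adj P Q ∧ d P = A ∧ d Q = B) ∧
    G.edgeSet.ncard ≤ G'.edgeSet.ncard :=
  stmt_9_general G G' hG hG' d hsurj h2
end
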